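/- An abelian category A is locally finitely presented if and only if A is a Grothendieck category admitting a generating set consisting of compact objects. -/

import Mathlib

/-!
Both sides are equivalent to Mathlib's `IsLocallyFinitelyPresentable`: cocompleteness together
with a small strong generator of finitely presentable objects. In an abelian category a strong
generator is just a separating family.

If finitely presentable objects separate, a filtered colimit of monomorphisms is a monomorphism
(test it on a finitely presentable object, which factors through a finite stage), and this gives
AB5. Conversely, given a separator `G`, every finitely presentable `X` is a quotient of some `Gⁿ`:
the cokernels of the finite subsums of all maps `G ⟶ X` form a filtered system with colimit zero,
so by compactness one of them already vanishes. Since an abelian category with a separator is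
well-copowered, the finitely presentable objects are then essentially small.
-/

open CategoryTheory Limits Opposite

universe u

namespace Env

section Basics

variable {C : Type*} [Category C]

/-- `g` is a weak kernel of `f`. -/
def IsWeakKernel [Limits.HasZeroMorphisms C] {A B K : C} (f : B ⟶ A) (g : K ⟶ B) : Prop :=
  g ≫ f = 0 ∧ ∀ ⦃K' : C⦄ (g' : K' ⟶ B), g' ≫ f = 0 → ∃ t : K' ⟶ K, t ≫ g = g'

/-- `h` is a weak cokernel of `f`. -/
def IsWeakCokernel [Limits.HasZeroMorphisms C] {A B Q : C} (f : A ⟶ B) (h : B ⟶ Q) : Prop :=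
  f ≫ h = 0 ∧ ∀ ⦃Q' : C⦄ (h' : B ⟶ Q'), f ≫ h' = 0 → ∃ t : Q ⟶ Q', h ≫ t = h'

/-- A kernel–cokernel pair: `f ≫ g = 0`, `f` is a kernel of `g` and `g` is a cokernel of `f`. -/
structure IsKernelCokernelPair [Limits.HasZeroMorphisms C] {A B X : C}
    (f : A ⟶ B) (g : B ⟶ X) : Prop where
  zero : f ≫ g = 0
  isKernel : Nonempty (IsLimit (KernelFork.ofι f zero))
  isCokernel : Nonempty (IsColimit (CokernelCofork.ofπ g zero))

end Basics

lemma map_comp_zero {C : Type*} [Category C] [Preadditive C]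
    {D : Type*} [Category D] [Preadditive D]
    (F : C ⥤ D) (hF : F.Additive) {X Y Z : C} {f : X ⟶ Y} {g : Y ⟶ Z}
    (wzero : f ≫ g = 0) : F.map f ≫ F.map g = 0 := by
  haveI := hF
  rw [← F.map_comp, wzero, Functor.map_zero]

/-- A Quillen exact structure on an additive category: a distinguished class of conflations
(kernel–cokernel pairs) satisfying Quillen's axioms. -/
structure ExactStructure (E : Type*) [Category E] [Preadditive E] where
  /-- `conf f g` means that `(f, g)` is a conflation. -/
  conf : ∀ ⦃A B C : E⦄, (A ⟶ B) → (B ⟶ C) → Prop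
  conf_pair : ∀ ⦃A B C : E⦄ (f : A ⟶ B) (g : B ⟶ C), conf f g → IsKernelCokernelPair f g
  defl_id : ∀ X : E, ∃ (A : E) (f : A ⟶ X), conf f (𝟙 X)
  defl_comp : ∀ ⦃A B C : E⦄ (g : A ⟶ B) (g' : B ⟶ C),
    (∃ (K : E) (f : K ⟶ A), conf f g) → (∃ (K : E) (f : K ⟶ B), conf f g') →
    ∃ (K : E) (f : K ⟶ A), conf f (g ≫ g')
  defl_pullback : ∀ ⦃B C C' : E⦄ (g : B ⟶ C) (h : C' ⟶ C),
    (∃ (K : E) (f : K ⟶ B), conf f g) →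
    ∃ (B' : E) (p : B' ⟶ B) (q : B' ⟶ C') (w : p ≫ g = q ≫ h),
      (∃ (K : E) (f : K ⟶ B'), conf f q) ∧ Nonempty (IsLimit (PullbackCone.mk p q w))
  infl_pushout : ∀ ⦃A B A' : E⦄ (f : A ⟶ B) (h : A ⟶ A'),
    (∃ (C : E) (g : B ⟶ C), conf f g) →
    ∃ (B' : E) (p : B ⟶ B') (q : A' ⟶ B') (w : f ≫ p = h ≫ q),
      (∃ (C : E) (g : B' ⟶ C), conf q g) ∧ Nonempty (IsColimit (PushoutCocone.mk p q w))

section Exact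

variable {E : Type*} [Category E] [Preadditive E]

/-- `g` is a deflation for the exact structure `S`. -/
def ExactStructure.IsDeflation (S : ExactStructure E) {B C : E} (g : B ⟶ C) : Prop :=
  ∃ (K : E) (f : K ⟶ B), S.conf f g

/-- `f` is an inflation for the exact structure `S`. -/
def ExactStructure.IsInflation (S : ExactStructure E) {A B : E} (f : A ⟶ B) : Prop :=
  ∃ (C : E) (g : B ⟶ C), S.conf f g

/-- A functor from an exact category to an additive category is right exact if it is additive
and for every conflation `(f, g)`, `F g` is a cokernel of `F f`. -/
structure IsRightExact (S : ExactStructure E) {B : Type*} [Category B] [Preadditive B]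
    (F : E ⥤ B) : Prop where
  additive : F.Additive
  preserves : ∀ ⦃A X C : E⦄ (f : A ⟶ X) (g : X ⟶ C) (h : S.conf f g),
    Nonempty (IsColimit (CokernelCofork.ofπ (F.map g)
      (map_comp_zero F additive (S.conf_pair f g h).zero)))

/-- A functor from an exact category to an additive category is left exact if it is additive
and for every conflation `(f, g)`, `F f` is a kernel of `F g`. -/
structure IsLeftExact (S : ExactStructure E) {B : Type*} [Category B] [Preadditive B]
    (F : E ⥤ B) : Prop where
  additive : F.Additive
  preserves : ∀ ⦃A X C : E⦄ (f : A ⟶ X) (g : X ⟶ C) (h : S.conf f g),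
    Nonempty (IsLimit (KernelFork.ofι (F.map f)
      (map_comp_zero F additive (S.conf_pair f g h).zero)))

/-- `g : C ⟶ B` is an Ext-kernel of `f : B ⟶ A` (w.r.t. the exact structure `S`):
`g ≫ f = 0` and for every `g' : C' ⟶ B` with `g' ≫ f = 0` there is a deflation
`d : D ⟶ C'` such that `d ≫ g'` factors through `g`. -/
def IsExtKernel (S : ExactStructure E) {A B C : E} (f : B ⟶ A) (g : C ⟶ B) : Prop :=
  g ≫ f = 0 ∧ ∀ ⦃C' : E⦄ (g' : C' ⟶ B), g' ≫ f = 0 →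
    ∃ (D : E) (d : D ⟶ C'), S.IsDeflation d ∧ ∃ t : D ⟶ C, t ≫ g = d ≫ g'

/-- An exact category is left Ext-coherent if every morphism admits an Ext-kernel. -/
def LeftExtCoherent (S : ExactStructure E) : Prop :=
  ∀ ⦃B A : E⦄ (f : B ⟶ A), ∃ (C : E) (g : C ⟶ B), IsExtKernel S f g

end Exact

/-- An additive category is left coherent if every morphism admits a weak kernel. -/
def LeftCoherent (E : Type*) [Category E] [Preadditive E] : Prop :=
  ∀ ⦃B A : E⦄ (f : B ⟶ A), ∃ (K : E) (g : K ⟶ B), IsWeakKernel f g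

section MoreDefs

variable (C : Type*) [Category C] [Preadditive C]

/-- An additive functor between additive categories preserving cokernels: every morphism
which is a cokernel (of some morphism) is sent to a cokernel of its image. -/
structure PreservesCokernelsP {C : Type*} [Category C] [Preadditive C]
    {D : Type*} [Category D] [Preadditive D] (F : C ⥤ D) : Prop where
  additive : F.Additive
  preserves : ∀ ⦃X Y Z : C⦄ (f : X ⟶ Y) (c : Y ⟶ Z) (w : f ≫ c = 0),
    Nonempty (IsColimit (CokernelCofork.ofπ c w)) →
    Nonempty (IsColimit (CokernelCofork.ofπ (F.map c) (map_comp_zero F additive w)))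

/-- An additive category is left abelian if it has cokernels and for every morphism
`f : A ⟶ B` with cokernel `c : B ⟶ X` and every `g : D ⟶ B` with `g ≫ c = 0` there is
a morphism `d : E ⟶ D` which is a cokernel (of some morphism), such that `d ≫ g` factors
through `f`. -/
structure IsLeftAbelian : Prop where
  hasCokernels : HasCokernels C
  factor : ∀ ⦃A B X : C⦄ (f : A ⟶ B) (c : B ⟶ X) (w : f ≫ c = 0),
    Nonempty (IsColimit (CokernelCofork.ofπ c w)) →
    ∀ ⦃D : C⦄ (g : D ⟶ B), g ≫ c = 0 →
      ∃ (W E : C) (u : W ⟶ E) (d : E ⟶ D) (w' : u ≫ d = 0),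
        Nonempty (IsColimit (CokernelCofork.ofπ d w')) ∧ ∃ t : E ⟶ A, t ≫ f = d ≫ g

/-- A preadditive category (with its given preadditive structure) is abelian:
it has finite biproducts, kernels and cokernels, and every monomorphism and every
epimorphism is normal. -/
def IsAbelianP : Prop :=
  HasFiniteBiproducts C ∧ HasKernels C ∧ HasCokernels C ∧
    (∀ ⦃X Y : C⦄ (f : X ⟶ Y), Mono f → Nonempty (NormalMono f)) ∧
    (∀ ⦃X Y : C⦄ (f : X ⟶ Y), Epi f → Nonempty (NormalEpi f))

end MoreDefs

/-- An object `X` is compact (finitely presented) if `Hom(X, -)` preserves filtered colimits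
(indexed by small filtered categories in `Type u`). -/
def IsCompact {C : Type*} [Category C] (X : C) : Prop :=
  ∀ (J : Type u) (_ : SmallCategory J), IsFiltered J →
    Nonempty (PreservesColimitsOfShape J (coyoneda.obj (op X)))

section RexAbelian

variable {A : Type*} [Category A] [Abelian A] {B : Type*} [Category B] [Preadditive B]

/-- A functor from an abelian category (whose conflations are all kernel–cokernel pairs,
i.e. all short exact sequences) is right exact if it is additive and sends every short exact
sequence `(f, g)` to a diagram where `F g` is a cokernel of `F f`. -/
structure IsRightExactAb (F : A ⥤ B) : Prop where
  additive : F.Additive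
  preserves : ∀ ⦃X Y Z : A⦄ (f : X ⟶ Y) (g : Y ⟶ Z) (h : IsKernelCokernelPair f g),
    Nonempty (IsColimit (CokernelCofork.ofπ (F.map g) (map_comp_zero F additive h.zero)))

/-- A functor from an abelian category (whose conflations are all kernel–cokernel pairs,
i.e. all short exact sequences) is left exact if it is additive and sends every short exact
sequence `(f, g)` to a diagram where `F f` is a kernel of `F g`. -/
structure IsLeftExactAb (F : A ⥤ B) : Prop where
  additive : F.Additive
  preserves : ∀ ⦃X Y Z : A⦄ (f : X ⟶ Y) (g : Y ⟶ Z) (h : IsKernelCokernelPair f g),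
    Nonempty (IsLimit (KernelFork.ofι (F.map f) (map_comp_zero F additive h.zero)))

end RexAbelian

section Envelope

/-- `(A, i)` is a right abelian envelope of the exact category `(E, S)`: `i` is right exact
and for every abelian category `B`, precomposition with `i` induces an equivalence from the
category of right exact functors `A ⥤ B` to the category of right exact functors `E ⥤ B`.

The equivalence given by precomposition is expressed by: precomposition with `i` sends right
exact functors to right exact functors, it is fully faithful (whiskering is a bijection on
natural transformations) and essentially surjective (every right exact `E ⥤ B` is isomorphic
to some `i ⋙ G` with `G` right exact). -/
structure IsRightAbelianEnvelope.{u₀, w₀, v₁, w₁, v₂, w₂} {E : Type u₀} [Category.{w₀} E]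
    [Preadditive E] (S : ExactStructure E)
    {A : Type v₁} [Category.{w₁} A] [Abelian A] (i : E ⥤ A) : Prop where
  rightExact : IsRightExact S i
  comp_rightExact : ∀ (B : Type v₂) [Category.{w₂} B] [Abelian B] (G : A ⥤ B),
    IsRightExactAb G → IsRightExact S (i ⋙ G)
  whisker_bijective : ∀ (B : Type v₂) [Category.{w₂} B] [Abelian B] (G G' : A ⥤ B),
    IsRightExactAb G → IsRightExactAb G' →
      Function.Bijective (fun σ : G ⟶ G' => Functor.whiskerLeft i σ)
  essSurj : ∀ (B : Type v₂) [Category.{w₂} B] [Abelian B] (F : E ⥤ B),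
    IsRightExact S F → ∃ G : A ⥤ B, IsRightExactAb G ∧ Nonempty (i ⋙ G ≅ F)

/-- `(A, i)` is a left abelian envelope of the exact category `(E, S)`: the dual notion of
`IsRightAbelianEnvelope`, with left exact functors in place of right exact ones. -/
structure IsLeftAbelianEnvelope.{u₀, w₀, v₁, w₁, v₂, w₂} {E : Type u₀} [Category.{w₀} E]
    [Preadditive E] (S : ExactStructure E)
    {A : Type v₁} [Category.{w₁} A] [Abelian A] (i : E ⥤ A) : Prop where
  leftExact : IsLeftExact S i
  comp_leftExact : ∀ (B : Type v₂) [Category.{w₂} B] [Abelian B] (G : A ⥤ B),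
    IsLeftExactAb G → IsLeftExact S (i ⋙ G)
  whisker_bijective : ∀ (B : Type v₂) [Category.{w₂} B] [Abelian B] (G G' : A ⥤ B),
    IsLeftExactAb G → IsLeftExactAb G' →
      Function.Bijective (fun σ : G ⟶ G' => Functor.whiskerLeft i σ)
  essSurj : ∀ (B : Type v₂) [Category.{w₂} B] [Abelian B] (F : E ⥤ B),
    IsLeftExact S F → ∃ G : A ⥤ B, IsLeftExactAb G ∧ Nonempty (i ⋙ G ≅ F)

/-- A witness for the existence of a right abelian envelope of `(E, S)`: an abelian
category (with object type in `Type (u + 1)` and hom types in `Type u`) together with a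
right exact functor from `E` satisfying the universal property of the right abelian
envelope (where the test abelian categories are taken of the same size). -/
structure RightAbelianEnvelopeWitness {E : Type u} [SmallCategory E] [Preadditive E]
    (S : ExactStructure E) where
  A : Type (u + 1)
  [cat : Category.{u} A]
  [ab : Abelian A]
  i : E ⥤ A
  env : IsRightAbelianEnvelope.{u, u, u + 1, u, u + 1, u} S i

/-- Existence of a right abelian envelope of `(E, S)`. -/
def HasRightAbelianEnvelope {E : Type u} [SmallCategory E] [Preadditive E]
    (S : ExactStructure E) : Prop :=
  Nonempty (RightAbelianEnvelopeWitness S)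

end Envelope

section Lex

variable {E : Type u} [SmallCategory E] [Preadditive E]

/-- A functor `Eᵒᵖ ⥤ Ab` is left exact w.r.t. the exact structure `S` if it is additive and
sends every conflation `(f : A ⟶ B, g : B ⟶ C)` to an exact sequence
`0 ⟶ F C ⟶ F B ⟶ F A`: `F g.op` is injective and its image is the kernel of `F f.op`. -/
structure IsLexFunctor (S : ExactStructure E) (F : Eᵒᵖ ⥤ AddCommGrpCat.{u}) : Prop where
  additive : F.Additive
  inj : ∀ ⦃A B C : E⦄ (f : A ⟶ B) (g : B ⟶ C), S.conf f g →
    Function.Injective (F.map g.op)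
  ex : ∀ ⦃A B C : E⦄ (f : A ⟶ B) (g : B ⟶ C), S.conf f g →
    ∀ x : F.obj (op B), F.map f.op x = 0 ↔ ∃ y : F.obj (op C), F.map g.op y = x

/-- The category `Lex(E)` of left exact functors `Eᵒᵖ ⥤ Ab`. -/
abbrev LexCat (S : ExactStructure E) := ObjectProperty.FullSubcategory (IsLexFunctor S)

/-- The full subcategory of compact objects of `Lex(E)`. -/
abbrev LexCompact (S : ExactStructure E) :=
  ObjectProperty.FullSubcategory (fun F : LexCat S => IsCompact.{u} F)

lemma yoneda_isLex (S : ExactStructure E) (X : E) :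
    IsLexFunctor S (preadditiveYoneda.obj X) where
  additive := inferInstance
  inj := by
    intro A B C f g hc
    obtain ⟨w, hker, hcoker⟩ := S.conf_pair f g hc
    intro x y hxy
    exact Cofork.IsColimit.hom_ext hcoker.some hxy
  ex := by
    intro A B C f g hc
    obtain ⟨w, hker, hcoker⟩ := S.conf_pair f g hc
    intro x
    constructor
    · intro hx
      obtain ⟨y, hy⟩ := CokernelCofork.IsColimit.desc' hcoker.some x hx
      exact ⟨y, hy⟩
    · rintro ⟨y, rfl⟩
      first
        | (change f ≫ g ≫ (show C ⟶ X from y) = 0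
           rw [← Category.assoc, w, zero_comp])
        | (simp [preadditiveYoneda, w])

/-- The Yoneda embedding of `E` into `Lex(E)`, sending `X` to `Hom_E(-, X)`. -/
def yonedaLex (S : ExactStructure E) : E ⥤ LexCat S :=
  ObjectProperty.lift _ preadditiveYoneda (yoneda_isLex S)

/-- The Yoneda embedding of `E` into the subcategory of compact objects of `Lex(E)`, given
a proof that all representable functors are compact. -/
def yonedaLexC (S : ExactStructure E) (hc : ∀ X : E, IsCompact.{u} ((yonedaLex S).obj X)) :
    E ⥤ LexCompact S :=
  ObjectProperty.lift _ (yonedaLex S) hc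

end Lex

section LFP

variable {C : Type*} [Category C]

/-- `X` is a filtered colimit of compact objects. -/
def IsFilteredColimitOfCompacts (X : C) : Prop :=
  ∃ (J : Type u) (_ : SmallCategory J) (_ : IsFiltered J) (F : J ⥤ C)
    (_ : ∀ j : J, IsCompact.{u} (F.obj j)),
    Nonempty ((t : Cocone F) ×' (IsColimit t) ×' (t.pt ≅ X))

/-- A category is locally finitely presented if it has (small) filtered colimits, its
compact objects form a skeletally small full subcategory, and every object is a filtered
colimit of compact objects. -/
def IsLocallyFinitelyPresented (C : Type*) [Category C] : Prop :=
  HasFilteredColimitsOfSize.{u, u} C ∧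
    EssentiallySmall.{u} (ObjectProperty.FullSubcategory (fun X : C => IsCompact.{u} X)) ∧
    ∀ X : C, IsFilteredColimitOfCompacts.{u} X

/-- AB5: small filtered colimits are exact, i.e. for every small filtered category `J`
(such that `C` has colimits of shape `J`), the colimit functor `(J ⥤ C) ⥤ C` preserves
finite limits. -/
def AB5P (C : Type*) [Category C] : Prop :=
  ∀ (J : Type u) (_ : SmallCategory J), IsFiltered J →
    ∀ (h : HasColimitsOfShape J C),
      Nonempty (PreservesFiniteLimits (@colim J _ C _ h))

/-- A Grothendieck category: an abelian category (`IsAbelianP` w.r.t. the given preadditive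
structure) with a generator and small colimits, in which small filtered colimits are
exact (AB5). -/
def IsGrothendieckP (C : Type*) [Category C] [Preadditive C] : Prop :=
  IsAbelianP C ∧ HasColimitsOfSize.{u, u} C ∧ (∃ G : C, IsSeparator G) ∧ AB5P.{u} C

end LFP

end Env

open Cardinal

attribute [local instance] fact_isRegular_aleph0

universe v

section

variable {C : Type v} [Category.{u} C]

lemma mono_colimMap_of_isSeparating {P : ObjectProperty C} (hP : P.IsSeparating)
    (hPfp : P ≤ ObjectProperty.isFinitelyPresentable.{u} C)
    {J : Type u} [SmallCategory J] [IsFiltered J] [HasColimitsOfShape J C]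
    {F G : J ⥤ C} (η : F ⟶ G) [∀ j, Mono (η.app j)] : Mono (colimMap η) := by
  refine ⟨fun {X} u v huv ↦ hP _ _ fun T hT t ↦ ?_⟩
  have : IsFinitelyPresentable.{u} T := hPfp _ hT
  obtain ⟨i, a, ha⟩ := IsFinitelyPresentable.exists_hom_of_isColimit (colimit.isColimit F) (t ≫ u)
  obtain ⟨j, b, hb⟩ := IsFinitelyPresentable.exists_hom_of_isColimit (colimit.isColimit F) (t ≫ v)
  simp only [colimit.cocone_ι] at ha hb
  obtain ⟨k, p, q, hpq⟩ := IsFinitelyPresentable.exists_eq_of_isColimit (colimit.isColimit G)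
    (a ≫ η.app i) (b ≫ η.app j)
    (by simp only [colimit.cocone_ι, Category.assoc, ← ι_colimMap, reassoc_of% ha,
      reassoc_of% hb, huv])
  have hab : a ≫ F.map p = b ≫ F.map q := by
    rw [← cancel_mono (η.app k)]
    simpa only [Category.assoc, η.naturality] using hpq
  rw [← ha, ← hb, ← colimit.w F p, ← colimit.w F q, reassoc_of% hab]

lemma essentiallySmall_exists_epi [WellPowered.{u} Cᵒᵖ] (Y : C) :
    ObjectProperty.EssentiallySmall.{u} (fun X : C ↦ ∃ p : Y ⟶ X, Epi p) :=
  ⟨ObjectProperty.ofObj (fun S : Subobject (op Y) ↦ unop (S : Cᵒᵖ)), inferInstance,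
    fun _ ⟨p, _⟩ ↦ ⟨_, ⟨Subobject.mk p.op⟩, ⟨(Subobject.underlyingIso p.op).unop⟩⟩⟩

end

namespace CategoryTheory.ObjectProperty.IsSeparating

variable {C : Type v} [Category.{u} C] {P : ObjectProperty C}

lemma exists_isSeparator [HasZeroMorphisms C] [HasCoproducts.{u} C] [ObjectProperty.Small.{u} P]
    (hP : P.IsSeparating) : ∃ G : C, IsSeparator G := by
  let f : Shrink.{u} (Subtype P) → C := fun i ↦ ((equivShrink _).symm i).1
  refine ⟨∐ f, isSeparator_coproduct (hP.of_le fun X hX ↦ ?_)⟩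
  simpa [f] using ofObj_apply f (equivShrink _ ⟨X, hX⟩)

lemma of_le_isoClosure {Q : ObjectProperty C} (hP : P.IsSeparating) (h : P ≤ Q.isoClosure) :
    Q.IsSeparating := by
  intro X Y f g hfg
  refine hP _ _ fun G hG t ↦ ?_
  obtain ⟨G', hG', ⟨e⟩⟩ := h _ hG
  simpa using e.hom ≫= hfg G' hG' (e.inv ≫ t)

lemma isStrongGenerator [Balanced C] (hP : P.IsSeparating) : P.IsStrongGenerator :=
  isStrongGenerator_iff.2 ⟨hP, fun _ _ i _ hi ↦ hP.isDetecting _ fun G hG t ↦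
    (hi G hG t).elim fun s hs ↦ ⟨s, hs, fun _ hs' ↦ (cancel_mono i).1 (hs'.trans hs.symm)⟩⟩

end CategoryTheory.ObjectProperty.IsSeparating

section Abelian

variable {C : Type v} [Category.{u} C] [Abelian C] {X : C} {ι : Type u} {f : ι → C}

lemma comp_cokernel_π_sigmaDesc (g : ∀ i, f i ⟶ X) {F : Finset ι} {i : ι} (hi : i ∈ F) :
    g i ≫ cokernel.π (Sigma.desc fun j : F ↦ g j) = 0 := by
  rw [← Sigma.ι_desc (fun j : F ↦ g j) ⟨i, hi⟩, Category.assoc, cokernel.condition, comp_zero]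

noncomputable def finsetCokernelDiagram (g : ∀ i, f i ⟶ X) : Finset ι ⥤ C where
  obj F := cokernel (Sigma.desc fun i : F ↦ g i)
  map h := cokernel.desc _ (cokernel.π _)
    (Sigma.hom_ext _ _ fun ⟨i, hi⟩ ↦ by simpa using comp_cokernel_π_sigmaDesc g (leOfHom h hi))
  map_id _ := coequalizer.hom_ext (by simp)
  map_comp _ _ := coequalizer.hom_ext (by simp)

lemma exists_finset_epi_sigmaDesc [HasColimitsOfShape (Finset ι) C] [IsFinitelyPresentable.{u} X]
    (g : ∀ i, f i ⟶ X) (hg : ∀ ⦃Z : C⦄ (φ : X ⟶ Z), (∀ i, g i ≫ φ = 0) → φ = 0) :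
    ∃ F : Finset ι, Epi (Sigma.desc fun i : F ↦ g i) := by
  let D := finsetCokernelDiagram g
  let π (F : Finset ι) : X ⟶ D.obj F := cokernel.π _
  have hπ {F F' : Finset ι} (h : F ⟶ F') : π F ≫ D.map h = π F' := cokernel.π_desc _ _ _
  -- every `g i` dies in `D.obj {i}`, so `X` maps to zero in the colimit
  have h0 : π ∅ ≫ colimit.ι D ∅ = 0 := by
    refine hg _ fun i ↦ ?_
    rw [← colimit.w D (homOfLE (Finset.empty_subset {i})), reassoc_of% (hπ _)]
    have hi : g i ≫ π {i} = 0 := comp_cokernel_π_sigmaDesc g (Finset.mem_singleton_self i)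
    rw [reassoc_of% hi, zero_comp]
  obtain ⟨F, a, b, hab⟩ := IsFinitelyPresentable.exists_eq_of_isColimit (colimit.isColimit D)
    (π ∅) (0 : X ⟶ D.obj ∅) (by simpa using h0)
  exact ⟨F, Abelian.epi_of_cokernel_π_eq_zero _ (show π F = 0 by rw [← hπ a, hab, zero_comp])⟩

lemma essentiallySmall_isFinitelyPresentable [HasColimitsOfSize.{u, u} C] {G : C}
    (hG : IsSeparator G) :
    ObjectProperty.EssentiallySmall.{u} (ObjectProperty.isFinitelyPresentable.{u} C) := by
  have : WellPowered.{u} C := wellPowered_of_isSeparator G hG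
  have (n : ℕ) := essentiallySmall_exists_epi (∐ fun _ : Fin n ↦ G)
  refine .of_le (Q := ⨆ n : ℕ, fun X ↦ ∃ p : (∐ fun _ : Fin n ↦ G) ⟶ X, Epi p) fun X hX ↦ ?_
  have : IsFinitelyPresentable.{u} X := hX
  obtain ⟨F, hF⟩ := exists_finset_epi_sigmaDesc (f := fun _ : G ⟶ X ↦ G) (fun g ↦ g)
    fun _ φ h ↦ (isSeparator_def G).1 hG φ 0 (by simpa using h)
  simp only [iSup_apply, iSup_Prop_eq]
  exact ⟨F.card, (Sigma.reindex F.equivFin.symm fun _ ↦ G).hom ≫ Sigma.desc fun g : F ↦ g.1,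
    epi_comp _ _⟩

end Abelian

namespace Env

section

variable {C : Type v} [Category.{u} C]

lemma isCompact_iff_isFinitelyPresentable {X : C} :
    IsCompact.{u} X ↔ IsFinitelyPresentable.{u} X := by
  rw [isFinitelyPresentable_iff_preservesFilteredColimitsOfSize]
  exact ⟨fun h ↦ ⟨fun J _ hJ ↦ (h J _ hJ).some⟩,
    fun h J _ hJ ↦ ⟨h.preserves_filtered_colimits J⟩⟩

lemma isFilteredColimitOfCompacts_iff {X : C} :
    IsFilteredColimitOfCompacts.{u} X ↔ ∃ (J : Type u) (_ : SmallCategory J) (_ : IsFiltered J),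
      (ObjectProperty.isFinitelyPresentable.{u} C).colimitsOfShape J X := by
  simp only [IsFilteredColimitOfCompacts, isCompact_iff_isFinitelyPresentable]
  constructor
  · rintro ⟨J, _, _, F, hF, ⟨t, ht, e⟩⟩
    exact ⟨J, _, ‹_›, ⟨
      { diag := F
        ι := t.ι ≫ (Functor.const J).map e.hom
        isColimit := ht.ofIsoColimit (Cocone.ext e)
        prop_diag_obj := hF }⟩⟩
  · rintro ⟨J, _, _, ⟨p⟩⟩
    exact ⟨J, _, ‹_›, p.diag, p.prop_diag_obj, ⟨_, p.isColimit, Iso.refl _⟩⟩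

lemma isLocallyFinitelyPresented_iff_isLocallyFinitelyPresentable [HasFiniteColimits C] :
    IsLocallyFinitelyPresented.{u} C ↔ IsLocallyFinitelyPresentable.{u} C := by
  have hcompact : (fun X : C ↦ IsCompact.{u} X) = ObjectProperty.isFinitelyPresentable.{u} C :=
    funext fun _ ↦ propext isCompact_iff_isFinitelyPresentable
  rw [IsLocallyFinitelyPresented, hcompact]
  simp only [isFilteredColimitOfCompacts_iff]
  constructor
  · rintro ⟨_, _, hcolim⟩
    have : HasColimitsOfSize.{u, u} C := has_colimits_of_finite_and_filtered
    have : ObjectProperty.EssentiallySmall.{u} (ObjectProperty.isFinitelyPresentable.{u} C) :=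
      (ObjectProperty.exists_equivalence_iff _).1 ⟨_, _, ⟨equivSmallModel _⟩⟩
    have hgen : (ObjectProperty.isFinitelyPresentable.{u} C).IsCardinalFilteredGenerator ℵ₀ :=
      { le_isCardinalPresentable := le_rfl
        exists_colimitsOfShape := fun X ↦ by
          obtain ⟨J, _, _, hX⟩ := hcolim X
          exact ⟨J, _, (isCardinalFiltered_aleph0_iff J).2 ‹_›, hX⟩ }
    have := hgen.hasCardinalFilteredGenerator
    constructor
  · intro _
    refine ⟨inferInstance, inferInstance, fun X ↦ ?_⟩
    obtain ⟨P, _, hP⟩ := HasCardinalFilteredGenerator.exists_generator C ℵ₀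
    obtain ⟨J, _, _, hX⟩ := hP.exists_colimitsOfShape X
    exact ⟨J, _, (isCardinalFiltered_aleph0_iff J).1 ‹_›,
      ObjectProperty.colimitsOfShape_monotone J hP.le_isCardinalPresentable _ hX⟩

lemma ab5P_of_isSeparating [Abelian C] {P : ObjectProperty C} (hP : P.IsSeparating)
    (hPfp : P ≤ ObjectProperty.isFinitelyPresentable.{u} C) : AB5P.{u} C := by
  intro J _ _ _
  have : (colim : (J ⥤ C) ⥤ C).PreservesMonomorphisms :=
    ⟨fun η _ ↦ mono_colimMap_of_isSeparating hP hPfp η⟩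
  exact ⟨(hasExactColimitsOfShape_of_preservesMono (J := J) (C := C)).preservesFiniteLimits⟩

end

/-- An abelian category is locally finitely presented if and only if it is a Grothendieck
category admitting a generating (separating) set of compact objects. -/
theorem statement_16 {A : Type v} [Category.{u} A] [Abelian A] :
    IsLocallyFinitelyPresented.{u} A ↔
      (HasColimitsOfSize.{u, u} A ∧ (∃ G : A, IsSeparator G) ∧ AB5P.{u} A ∧
        ∃ S : Set A, (∀ X ∈ S, IsCompact.{u} X) ∧ ObjectProperty.IsSeparating S) := by
  simp only [isLocallyFinitelyPresented_iff_isLocallyFinitelyPresentable,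
    isCompact_iff_isFinitelyPresentable]
  constructor
  · intro _
    obtain ⟨P, _, hP, hPfp⟩ :=
      (IsCardinalLocallyPresentable.iff_exists_isStrongGenerator A ℵ₀).1 ‹_›
    exact ⟨inferInstance, hP.isSeparating.exists_isSeparator,
      ab5P_of_isSeparating hP.isSeparating hPfp, P, hPfp, hP.isSeparating⟩
  · rintro ⟨_, ⟨G, hG⟩, -, S, hS, hSsep⟩
    have := essentiallySmall_isFinitelyPresentable hG
    obtain ⟨Q, _, hQfp, hfpQ⟩ := ObjectProperty.EssentiallySmall.exists_small_le
      (ObjectProperty.isFinitelyPresentable.{u} A)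
    exact (IsCardinalLocallyPresentable.iff_exists_isStrongGenerator A ℵ₀).2
      ⟨Q, ‹_›, (hSsep.of_le_isoClosure fun X hX ↦ hfpQ _ (hS X hX)).isStrongGenerator, hQfp⟩
end Env
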